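/- For a complete extended metric space (X,d) the following are equivalent: (a) (X,d) is convex; (b) every pair of points x,x' with d(x,x') < ∞ is joined by a metric segment, i.e. an isometric map φ : [0,d(x,x')] → X with φ(0) = x and φ(d(x,x')) = x'; (c) every pair of points x,x' with d(x,x') < ∞ admits a midpoint, i.e. a point y with d(x,y) = d(x',y) = d(x,x')/2. -/

import Mathlib

/-!
Segments give midpoints and midpoints give intermediate points, so only convexity ⇒ segments
needs work. By Zorn there is a maximal isometric partial map `ℝ ⇀ X` through `(0, x)` and
`(D, x')`. Completeness of `X` makes its domain closed. Convexity leaves no gap in the domain: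
if `(a, b)` were a gap with images `u`, `v`, a point `z` strictly between `u` and `v` could be
added at `c = a + d(u, z)`, since for every other point `(t, w)` of the graph `t ≤ a` or `b ≤ t`,
and then the triangle inequality through `u` and `v` forces `d(w, z) = |t - c|`. A closed subset
of `ℝ` without gaps contains the interval between any two of its points.
-/

open ENNReal Set

theorem Real.edist_add_edist_of_mem_uIcc {x y z : ℝ} (h : y ∈ uIcc x z) :
    edist x y + edist y z = edist x z := by
  rw [edist_dist, edist_dist, edist_dist, ← ENNReal.ofReal_add dist_nonneg dist_nonneg,
    dist_add_dist_of_mem_segment (segment_eq_uIcc x z ▸ h)]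

theorem Real.exists_mem_Ioo_edist_eq_of_add_eq {a b : ℝ} {d₁ d₂ : ℝ≥0∞} (hab : a ≤ b)
    (h₁ : d₁ ≠ 0) (h₂ : d₂ ≠ 0) (h : d₁ + d₂ = edist a b) :
    ∃ c ∈ Ioo a b, edist a c = d₁ ∧ edist c b = d₂ := by
  have hd₁b : d₁ ≤ edist a b := h ▸ le_self_add
  have hd₁ : d₁ ≠ ⊤ := ne_top_of_le_ne_top (edist_ne_top a b) hd₁b
  set c := a + d₁.toReal
  have hac : edist a c = d₁ := by
    rw [edist_dist, Real.dist_eq, abs_sub_comm, add_sub_cancel_left, abs_of_nonneg toReal_nonneg,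
      ofReal_toReal hd₁]
  have hcb_le : c ≤ b := by
    rw [edist_dist, Real.dist_eq, abs_sub_comm, abs_of_nonneg (sub_nonneg.2 hab)] at hd₁b
    linarith [toReal_le_of_le_ofReal (sub_nonneg.2 hab) hd₁b]
  have hc : c ∈ uIcc a b := mem_uIcc_of_le (le_add_of_nonneg_right toReal_nonneg) hcb_le
  have hcb : edist c b = d₂ := by
    rw [← ENNReal.add_right_inj hd₁, h, ← hac, Real.edist_add_edist_of_mem_uIcc hc]
  refine ⟨c, ⟨?_, ?_⟩, hac, hcb⟩
  · exact (le_add_of_nonneg_right toReal_nonneg).lt_of_ne (mt edist_eq_zero.2 (by rwa [hac]))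
  · exact hcb_le.lt_of_ne (mt edist_eq_zero.2 (by rwa [hcb]))

theorem Real.Icc_subset_of_isClosed_of_forall_Ioo_nonempty {S : Set ℝ} (hS : IsClosed S) {a b : ℝ}
    (ha : a ∈ S) (hb : b ∈ S) (hgap : ∀ x ∈ S, ∀ y ∈ S, x < y → (S ∩ Ioo x y).Nonempty) :
    Icc a b ⊆ S := by
  rintro g ⟨hag, hgb⟩
  by_contra hg
  have hbelow : BddAbove (S ∩ Icc a g) := bddAbove_Icc.mono inter_subset_right
  have habove : BddBelow (S ∩ Icc g b) := bddBelow_Icc.mono inter_subset_right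
  set x := sSup (S ∩ Icc a g)
  set y := sInf (S ∩ Icc g b)
  have hx : x ∈ S ∩ Icc a g := (hS.inter isClosed_Icc).csSup_mem ⟨a, ha, le_rfl, hag⟩ hbelow
  have hy : y ∈ S ∩ Icc g b := (hS.inter isClosed_Icc).csInf_mem ⟨b, hb, hgb, le_rfl⟩ habove
  have hxg : x < g := hx.2.2.lt_of_ne fun h => hg (h ▸ hx.1)
  have hgy : g < y := hy.2.1.lt_of_ne fun h => hg (h ▸ hy.1)
  obtain ⟨c, hcS, hxc, hcy⟩ := hgap x hx.1 y hy.1 (hxg.trans hgy)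
  rcases le_total c g with hcg | hgc
  · exact (le_csSup hbelow ⟨hcS, hx.2.1.trans hxc.le, hcg⟩).not_gt hxc
  · exact (csInf_le habove ⟨hcS, hgc, hcy.le.trans hy.2.2⟩).not_gt hcy

theorem edist_eq_of_mem_uIcc {X : Type*} [PseudoEMetricSpace X] {t s c r : ℝ} {w u z v : X}
    (hs : s ∈ uIcc t c) (hc : c ∈ uIcc s r) (hsr : s ∈ uIcc t r)
    (hwu : edist w u = edist t s) (hwv : edist w v = edist t r)
    (huz : edist u z = edist s c) (hzv : edist z v = edist c r) :
    edist w z = edist t c := by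
  refine le_antisymm ?_ ?_
  · calc edist w z ≤ edist w u + edist u z := edist_triangle w u z
      _ = edist t c := by rw [hwu, huz, Real.edist_add_edist_of_mem_uIcc hs]
  · refine (ENNReal.add_le_add_iff_right (edist_ne_top c r)).1 ?_
    calc edist t c + edist c r = edist t r := by
          rw [← Real.edist_add_edist_of_mem_uIcc hs, add_assoc,
            Real.edist_add_edist_of_mem_uIcc hc, Real.edist_add_edist_of_mem_uIcc hsr]
      _ = edist w v := hwv.symm
      _ ≤ edist w z + edist z v := edist_triangle w z v
      _ = edist w z + edist c r := by rw [hzv]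

section IsometricGraph

variable {α X : Type*} [PseudoEMetricSpace α]

/-- `F` is the graph of a partial map `α ⇀ X` preserving distances. -/
def IsIsometricGraph [PseudoEMetricSpace X] (F : Set (α × X)) : Prop :=
  F.Pairwise fun p q => edist p.2 q.2 = edist p.1 q.1

namespace IsIsometricGraph

variable {F M : Set (α × X)}

theorem edist_eq [PseudoEMetricSpace X] (hF : IsIsometricGraph F) {s t : α} {x y : X}
    (hx : (s, x) ∈ F) (hy : (t, y) ∈ F) : edist x y = edist s t := by
  by_cases hxy : (s, x) = (t, y)
  · simp_all
  · exact hF hx hy hxy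

theorem eq_of_mem [EMetricSpace X] (hF : IsIsometricGraph F) {s : α} {x y : X}
    (hx : (s, x) ∈ F) (hy : (s, y) ∈ F) : x = y :=
  edist_eq_zero.1 (by rw [hF.edist_eq hx hy, edist_self])

theorem insert [PseudoEMetricSpace X] (hF : IsIsometricGraph F) {a : α} {w : X}
    (h : ∀ t y, (t, y) ∈ F → edist w y = edist a t) : IsIsometricGraph (insert (a, w) F) :=
  pairwise_insert.2 ⟨hF, fun q hq _ => ⟨h q.1 q.2 hq, by rw [edist_comm, h q.1 q.2 hq, edist_comm]⟩⟩

theorem sUnion_of_isChain [PseudoEMetricSpace X] {c : Set (Set (α × X))}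
    (hc : IsChain (· ⊆ ·) c) (h : ∀ F ∈ c, IsIsometricGraph F) : IsIsometricGraph (⋃₀ c) :=
  (pairwise_sUnion hc.directedOn).2 h

theorem exists_edist_eq_of_mem_closure [PseudoEMetricSpace X] [CompleteSpace X]
    (hF : IsIsometricGraph F) {a : α} (ha : a ∈ closure (Prod.fst '' F)) :
    ∃ w : X, ∀ t y, (t, y) ∈ F → edist w y = edist a t := by
  obtain ⟨u, hu, hua⟩ := mem_closure_iff_seq_limit.1 ha
  choose p hp hpu using hu
  have hmem : ∀ n, (u n, (p n).2) ∈ F := fun n => hpu n ▸ hp n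
  have hcauchy : CauchySeq fun n => (p n).2 := by
    simpa only [EMetric.cauchySeq_iff, hF.edist_eq (hmem _) (hmem _)] using hua.cauchySeq
  obtain ⟨w, hw⟩ := cauchySeq_tendsto_of_complete hcauchy
  refine ⟨w, fun t y hty => tendsto_nhds_unique (hw.edist tendsto_const_nhds) ?_⟩
  simpa only [hF.edist_eq (hmem _) hty] using hua.edist tendsto_const_nhds

theorem mem_of_maximal [PseudoEMetricSpace X] (hM : Maximal IsIsometricGraph M) {a : α} {w : X}
    (h : ∀ t y, (t, y) ∈ M → edist w y = edist a t) : (a, w) ∈ M :=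
  hM.mem_of_prop_insert (hM.prop.insert h)

theorem isClosed_image_fst_of_maximal [PseudoEMetricSpace X] [CompleteSpace X]
    (hM : Maximal IsIsometricGraph M) : IsClosed (Prod.fst '' M) :=
  isClosed_of_closure_subset fun _ ha =>
    let ⟨_, hw⟩ := hM.prop.exists_edist_eq_of_mem_closure ha
    ⟨_, mem_of_maximal hM hw, rfl⟩

end IsIsometricGraph

end IsometricGraph

section MetricConvexity

variable {X : Type*}

def IsMetricallyConvex (X : Type*) [PseudoEMetricSpace X] : Prop :=
  ∀ x y : X, x ≠ y → edist x y ≠ ⊤ →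
    ∃ z : X, z ≠ x ∧ z ≠ y ∧ edist x y = edist x z + edist z y

def IsMetricSegment [PseudoEMetricSpace X] (φ : ℝ → X) (x x' : X) : Prop :=
  (∀ s ∈ Icc (0 : ℝ) (edist x x').toReal, ∀ t ∈ Icc (0 : ℝ) (edist x x').toReal,
    edist (φ s) (φ t) = edist s t) ∧ φ 0 = x ∧ φ (edist x x').toReal = x'

def HasMetricSegments (X : Type*) [PseudoEMetricSpace X] : Prop :=
  ∀ x x' : X, edist x x' ≠ ⊤ → ∃ φ : ℝ → X, IsMetricSegment φ x x'

def HasMidpoints (X : Type*) [PseudoEMetricSpace X] : Prop :=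
  ∀ x x' : X, edist x x' ≠ ⊤ → ∃ y : X, edist x y = edist x x' / 2 ∧ edist x' y = edist x x' / 2

theorem IsMetricallyConvex.image_fst_inter_Ioo_nonempty_of_maximal [EMetricSpace X]
    (hX : IsMetricallyConvex X) {M : Set (ℝ × X)} (hM : Maximal IsIsometricGraph M) {a b : ℝ}
    {u v : X} (hu : (a, u) ∈ M) (hv : (b, v) ∈ M) (hab : a < b) :
    (Prod.fst '' M ∩ Ioo a b).Nonempty := by
  by_contra hgap
  have huv : edist u v = edist a b := hM.prop.edist_eq hu hv
  have hne : u ≠ v := by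
    rintro rfl
    exact hab.ne (edist_eq_zero.1 (by rw [← huv, edist_self]))
  obtain ⟨z, hzu, hzv, huzv⟩ := hX u v hne (huv ▸ edist_ne_top a b)
  obtain ⟨c, hc, hac, hcb⟩ := Real.exists_mem_Ioo_edist_eq_of_add_eq hab.le
    (mt edist_eq_zero.1 hzu.symm) (mt edist_eq_zero.1 hzv) (huzv.symm.trans huv)
  refine hgap ⟨c, ⟨(c, z), IsIsometricGraph.mem_of_maximal hM fun t w htw => ?_, rfl⟩, hc⟩
  rw [edist_comm, edist_comm c]
  have ht : t ∉ Ioo a b := fun ht => hgap ⟨t, ⟨_, htw, rfl⟩, ht⟩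
  rcases le_or_gt t a with hta | hat
  · exact edist_eq_of_mem_uIcc (mem_uIcc_of_le hta hc.1.le) (mem_uIcc_of_le hc.1.le hc.2.le)
      (mem_uIcc_of_le hta hab.le) (hM.prop.edist_eq htw hu) (hM.prop.edist_eq htw hv) hac.symm
      hcb.symm
  · have hbt : b ≤ t := not_lt.1 fun htb => ht ⟨hat, htb⟩
    exact edist_eq_of_mem_uIcc (mem_uIcc_of_ge hc.2.le hbt) (mem_uIcc_of_ge hc.1.le hc.2.le)
      (mem_uIcc_of_ge hab.le hbt) (hM.prop.edist_eq htw hv) (hM.prop.edist_eq htw hu)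
      (by rw [edist_comm, ← hcb, edist_comm]) (by rw [edist_comm, ← hac, edist_comm])

theorem IsMetricallyConvex.hasMetricSegments [EMetricSpace X] [CompleteSpace X]
    (hX : IsMetricallyConvex X) : HasMetricSegments X := by
  intro x x' hxx'
  set D := (edist x x').toReal
  have hD : 0 ≤ D := toReal_nonneg
  have hF₀ : IsIsometricGraph {((0 : ℝ), x), (D, x')} :=
    IsIsometricGraph.insert (pairwise_singleton _ _) fun t y hty => by
      obtain ⟨rfl, rfl⟩ := Prod.mk.inj (mem_singleton_iff.1 hty)
      rw [edist_dist, Real.dist_eq, zero_sub, abs_neg, abs_of_nonneg hD, ofReal_toReal hxx']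
  obtain ⟨M, hF₀M, hM⟩ := zorn_subset_nonempty {F | IsIsometricGraph F}
    (fun c hc hchain _ => ⟨⋃₀ c, IsIsometricGraph.sUnion_of_isChain hchain hc,
      fun _ => subset_sUnion_of_mem⟩) _ hF₀
  have h₀ : ((0 : ℝ), x) ∈ M := hF₀M (mem_insert _ _)
  have h₁ : (D, x') ∈ M := hF₀M (mem_insert_of_mem _ rfl)
  have hdom : Icc 0 D ⊆ Prod.fst '' M :=
    Real.Icc_subset_of_isClosed_of_forall_Ioo_nonempty
      (IsIsometricGraph.isClosed_image_fst_of_maximal hM) ⟨_, h₀, rfl⟩ ⟨_, h₁, rfl⟩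
      (forall_mem_image.2 fun _ hu => forall_mem_image.2 fun _ hv =>
        hX.image_fst_inter_Ioo_nonempty_of_maximal hM hu hv)
  have hsection : ∀ t ∈ Icc 0 D, ∃ y, (t, y) ∈ M := by
    intro _ ht
    obtain ⟨q, hq, rfl⟩ := hdom ht
    exact ⟨q.2, hq⟩
  have : Nonempty X := ⟨x⟩
  choose! φ hφ using hsection
  exact ⟨φ, fun s hs t ht => hM.prop.edist_eq (hφ s hs) (hφ t ht),
    hM.prop.eq_of_mem (hφ 0 ⟨le_rfl, hD⟩) h₀, hM.prop.eq_of_mem (hφ D ⟨hD, le_rfl⟩) h₁⟩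

theorem HasMetricSegments.hasMidpoints [PseudoEMetricSpace X] (hX : HasMetricSegments X) :
    HasMidpoints X := by
  intro x x' hxx'
  obtain ⟨φ, hφ, hφ₀, hφ₁⟩ := hX x x' hxx'
  set D := (edist x x').toReal
  have hD : 0 ≤ D := toReal_nonneg
  have hmid : D / 2 ∈ Icc 0 D := ⟨by linarith, by linarith⟩
  have hhalf : ENNReal.ofReal (D / 2) = edist x x' / 2 := by
    rw [ENNReal.ofReal_div_of_pos two_pos, ofReal_toReal hxx', ofReal_ofNat]
  refine ⟨φ (D / 2), ?_, ?_⟩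
  · rw [← hφ₀, hφ 0 ⟨le_rfl, hD⟩ _ hmid, hφ₀, edist_dist, Real.dist_eq, zero_sub, abs_neg,
      abs_of_nonneg (by linarith), hhalf]
  · rw [← hφ₁, hφ D ⟨hD, le_rfl⟩ _ hmid, hφ₁, edist_dist, Real.dist_eq, sub_half D,
      abs_of_nonneg (by linarith), hhalf]

theorem HasMidpoints.isMetricallyConvex [EMetricSpace X] (hX : HasMidpoints X) :
    IsMetricallyConvex X := by
  intro x y hxy hxy'
  obtain ⟨z, hxz, hyz⟩ := hX x y hxy'
  have hhalf : edist x y / 2 ≠ 0 := (ENNReal.half_pos (mt edist_eq_zero.1 hxy)).ne'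
  refine ⟨z, fun hzx => hhalf ?_, fun hzy => hhalf ?_, ?_⟩
  · rw [← hxz, hzx, edist_self]
  · rw [← hyz, hzy, edist_self]
  · rw [hxz, edist_comm z y, hyz, ENNReal.add_halves]

end MetricConvexity

theorem convex_iff_segments_iff_midpoints {X : Type*} [EMetricSpace X] [CompleteSpace X] :
    ((∀ x y : X, x ≠ y → edist x y ≠ ⊤ →
        ∃ z : X, z ≠ x ∧ z ≠ y ∧ edist x y = edist x z + edist z y) ↔
      (∀ x x' : X, edist x x' ≠ ⊤ →
        ∃ φ : ℝ → X,
          (∀ s ∈ Set.Icc (0 : ℝ) (edist x x').toReal,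
            ∀ t ∈ Set.Icc (0 : ℝ) (edist x x').toReal, edist (φ s) (φ t) = edist s t) ∧
          φ 0 = x ∧ φ (edist x x').toReal = x')) ∧
    ((∀ x x' : X, edist x x' ≠ ⊤ →
        ∃ φ : ℝ → X,
          (∀ s ∈ Set.Icc (0 : ℝ) (edist x x').toReal,
            ∀ t ∈ Set.Icc (0 : ℝ) (edist x x').toReal, edist (φ s) (φ t) = edist s t) ∧
          φ 0 = x ∧ φ (edist x x').toReal = x') ↔
      (∀ x x' : X, edist x x' ≠ ⊤ →
        ∃ y : X, edist x y = edist x x' / 2 ∧ edist x' y = edist x x' / 2)) :=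
  ⟨⟨IsMetricallyConvex.hasMetricSegments,
      fun h => HasMidpoints.isMetricallyConvex (HasMetricSegments.hasMidpoints h)⟩,
    ⟨HasMetricSegments.hasMidpoints,
      fun h => IsMetricallyConvex.hasMetricSegments (HasMidpoints.isMetricallyConvex h)⟩⟩
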